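/- For every integer i ≥ 1, every k ∈ ℕ, every ρ ∈ (0,1), every u ≥ 0, all reals γ, δ, and every radius ρ < r < 1, the contour integral 𝒥_{i,k} satisfies 𝒥_{i,k}(u,γ,δ,ρ) = (δ²/2)^{k+i−1} / Γ(k+i) · Φ₃(i, k+i; ρ·δ²/2, (u²/2)·(γ²δ²/2)). -/

import Mathlib

/-! On `|p| = r > ρ`, with `a = u²γ²/2` and `b = δ²/2`, the integrand
`(p - ρ)⁻ⁱ p⁻ᵏ e^{a/p} e^{bp}` is `p^{-(k+i)}` times the product of the binomial series of
`(1 - ρ/p)⁻ⁱ` and the exponential series of `e^{a/p}` and `e^{bp}`. This triple series converges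
absolutely and uniformly on the circle, so it may be integrated termwise, and only the terms with
total exponent `-1` survive. They are indexed by the powers `m` of `ρ` and `j` of `a`, and the
identities `(i)ₘ = m! C(m+i-1, m)` and `(k+i)_{m+j} = (m+j+k+i-1)! / (k+i-1)!` turn their sum into
the series of `Φ₃`. -/

open MeasureTheory Real Finset

/-- The confluent hypergeometric (Horn) function of two variables `Φ₃`. -/
noncomputable def Phi3 (b c x y : ℝ) : ℝ :=
  ∑' j : ℕ, ∑' n : ℕ,
    (ascPochhammer ℝ j).eval b /
      ((ascPochhammer ℝ (j + n)).eval c * (j.factorial : ℝ) * (n.factorial : ℝ)) *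
      x ^ j * y ^ n

/-- The contour integral `𝒥_{i,k}(u,γ,δ,ρ)` over the circle of radius `r`. -/
noncomputable def Jik (i k : ℕ) (u γ δ ρ r : ℝ) : ℂ :=
  (2 * Real.pi * Complex.I)⁻¹ *
    ∮ p in C(0, r), (p - (ρ : ℂ)) ^ (-(i : ℤ)) * p ^ (-(k : ℤ)) *
      Complex.exp ((u : ℂ) ^ 2 * (γ : ℂ) ^ 2 / (2 * p)) * Complex.exp ((δ : ℂ) ^ 2 * p / 2)

open scoped Nat

lemma circleIntegral_zpow {R : ℝ} (hR : 0 < R) (n : ℤ) :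
    (∮ z in C(0, R), z ^ n) = if n = -1 then 2 * π * Complex.I else 0 := by
  split_ifs with hn
  · simpa [hn] using circleIntegral.integral_sub_inv_of_mem_ball (c := 0) (w := 0)
      (Metric.mem_ball_self hR)
  · simpa using circleIntegral.integral_sub_zpow_of_ne hn 0 0 R

theorem hasSum_circleIntegral_of_hasSum_zpow {ι : Type*} [Countable ι] {c : ι → ℂ} {e : ι → ℤ}
    {f : ℂ → ℂ} {R : ℝ} (hR : 0 < R) (hs : Summable fun w => ‖c w‖ * R ^ e w)
    (hf : ∀ z ∈ Metric.sphere (0 : ℂ) R, HasSum (fun w => c w * z ^ e w) (f z)) :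
    HasSum (fun w => if e w = -1 then 2 * π * Complex.I * c w else 0) (∮ z in C(0, R), f z) := by
  have hterm (w : ι) : (∮ z in C(0, R), c w * z ^ e w) =
      if e w = -1 then 2 * π * Complex.I * c w else 0 := by
    rw [circleIntegral.integral_const_mul, circleIntegral_zpow hR]
    split_ifs <;> ring
  simp_rw [← hterm]
  refine intervalIntegral.hasSum_integral_of_dominated_convergence
    (fun w _ => R * (‖c w‖ * R ^ e w)) (fun w => ?_) (fun w => ?_) ?_ ?_ ?_
  · refine Continuous.aestronglyMeasurable ?_
    simp only [deriv_circleMap]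
    exact ((continuous_circleMap 0 R).mul continuous_const).smul (continuous_const.mul
      ((continuous_circleMap 0 R).zpow₀ _ fun θ => Or.inl (circleMap_ne_center hR.ne')))
  · refine Filter.Eventually.of_forall fun θ _ => le_of_eq ?_
    simp [norm_zpow, abs_of_pos hR]
  · exact Filter.Eventually.of_forall fun θ _ => hs.mul_left R
  · exact intervalIntegrable_const
  · exact Filter.Eventually.of_forall fun θ _ =>
      (hf _ (circleMap_mem_sphere 0 hR.le θ)).const_smul _

/-- The Laurent coefficient of `(p - ρ)^{-(i+1)} p^{-k} e^{a/p} e^{bp}` (note the shift of `i`)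
at the index `((m, j), n)`: the product of the `m`-th term of the binomial series in `ρ/p`, the
`j`-th term of the exponential series in `a/p` and the `n`-th one in `bp`. The corresponding power
of `p` is `laurentExp i k ((m, j), n)`. -/
def laurentCoeff {𝕜 : Type*} [Field 𝕜] (i : ℕ) (ρ a b : 𝕜) (w : (ℕ × ℕ) × ℕ) : 𝕜 :=
  (w.1.1 + i).choose i * ρ ^ w.1.1 * (a ^ w.1.2 / w.1.2 !) * (b ^ w.2 / w.2 !)

def laurentExp (i k : ℕ) (w : (ℕ × ℕ) × ℕ) : ℤ :=
  w.2 - (w.1.1 + w.1.2 + k + i + 1)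

@[simp, norm_cast]
lemma ofReal_laurentCoeff (i : ℕ) (ρ a b : ℝ) (w : (ℕ × ℕ) × ℕ) :
    ((laurentCoeff i ρ a b w : ℝ) : ℂ) = laurentCoeff i (ρ : ℂ) a b w := by
  simp [laurentCoeff]

lemma laurentCoeff_mul_zpow (i k : ℕ) (ρ a b : ℂ) {p : ℂ} (hp : p ≠ 0) (w : (ℕ × ℕ) × ℕ) :
    laurentCoeff i ρ a b w * p ^ laurentExp i k w =
      (w.1.1 + i).choose i * (ρ / p) ^ w.1.1 * ((a / p) ^ w.1.2 / w.1.2 !) *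
        ((b * p) ^ w.2 / w.2 !) * p ^ (-((k + i + 1 : ℕ) : ℤ)) := by
  obtain ⟨⟨m, j⟩, n⟩ := w
  have hexp : laurentExp i k ((m, j), n) = n + (-m + (-j + -((k + i + 1 : ℕ) : ℤ))) := by
    simp only [laurentExp]; push_cast; ring
  rw [hexp, zpow_add₀ hp, zpow_add₀ hp, zpow_add₀ hp]
  simp only [laurentCoeff, zpow_neg, zpow_natCast, div_pow, mul_pow]
  field_simp

lemma hasSum_laurentCoeff_mul_zpow (i k : ℕ) (ρ a b : ℂ) {p : ℂ} (hρp : ‖ρ‖ < ‖p‖) :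
    HasSum (fun w => laurentCoeff i ρ a b w * p ^ laurentExp i k w)
        ((p - ρ) ^ (-((i + 1 : ℕ) : ℤ)) * p ^ (-(k : ℤ)) * Complex.exp (a / p) *
          Complex.exp (b * p)) ∧
      Summable fun w => ‖laurentCoeff i ρ a b w‖ * ‖p‖ ^ laurentExp i k w := by
  have hp : p ≠ 0 := norm_pos_iff.mp ((norm_nonneg ρ).trans_lt hρp)
  have hq : ‖ρ / p‖ < 1 := by rwa [norm_div, div_lt_one (hρp.trans_le' (norm_nonneg ρ))]
  set F₁ : ℕ → ℂ := fun m => (m + i).choose i * (ρ / p) ^ m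
  set F₂ : ℕ → ℂ := fun j => (a / p) ^ j / (j ! : ℂ)
  set F₃ : ℕ → ℂ := fun n => (b * p) ^ n / (n ! : ℂ)
  have h₁ : HasSum F₁ (1 / (1 - ρ / p) ^ (i + 1)) := hasSum_choose_mul_geometric_of_norm_lt_one i hq
  have h₂ : HasSum F₂ (Complex.exp (a / p)) := by
    rw [Complex.exp_eq_exp_ℂ]; exact NormedSpace.expSeries_div_hasSum_exp _
  have h₃ : HasSum F₃ (Complex.exp (b * p)) := by
    rw [Complex.exp_eq_exp_ℂ]; exact NormedSpace.expSeries_div_hasSum_exp _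
  have h₁' : Summable fun m => ‖F₁ m‖ := by
    simpa [F₁, norm_pow] using summable_choose_mul_geometric_of_norm_lt_one (R := ℝ) i
      (r := ‖ρ / p‖) (by simpa using hq)
  have h₂' : Summable fun j => ‖F₂ j‖ := NormedSpace.norm_expSeries_div_summable _
  have h₃' : Summable fun n => ‖F₃ n‖ := NormedSpace.norm_expSeries_div_summable _
  have h₁₂' : Summable fun x : ℕ × ℕ => ‖F₁ x.1 * F₂ x.2‖ := h₁'.mul_norm h₂'
  have h₁₂ : HasSum (fun x : ℕ × ℕ => F₁ x.1 * F₂ x.2)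
      (1 / (1 - ρ / p) ^ (i + 1) * Complex.exp (a / p)) :=
    h₁.mul h₂ (summable_mul_of_summable_norm h₁' h₂')
  have h₁₂₃ : HasSum (fun w : (ℕ × ℕ) × ℕ => F₁ w.1.1 * F₂ w.1.2 * F₃ w.2)
      (1 / (1 - ρ / p) ^ (i + 1) * Complex.exp (a / p) * Complex.exp (b * p)) :=
    h₁₂.mul h₃ (summable_mul_of_summable_norm (f := fun x : ℕ × ℕ => F₁ x.1 * F₂ x.2) h₁₂' h₃')
  have hfactor (w : (ℕ × ℕ) × ℕ) : laurentCoeff i ρ a b w * p ^ laurentExp i k w =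
      F₁ w.1.1 * F₂ w.1.2 * F₃ w.2 * p ^ (-((k + i + 1 : ℕ) : ℤ)) :=
    laurentCoeff_mul_zpow i k ρ a b hp w
  have hsum : (p - ρ) ^ (-((i + 1 : ℕ) : ℤ)) * p ^ (-(k : ℤ)) * Complex.exp (a / p) *
      Complex.exp (b * p) = 1 / (1 - ρ / p) ^ (i + 1) * Complex.exp (a / p) *
      Complex.exp (b * p) * p ^ (-((k + i + 1 : ℕ) : ℤ)) := by
    rw [show p - ρ = p * (1 - ρ / p) by field_simp, mul_zpow,
      show k + i + 1 = k + (i + 1) by omega]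
    simp only [zpow_neg, zpow_natCast, pow_add]
    field_simp
  refine ⟨?_, ?_⟩
  · simp_rw [hfactor, hsum]
    exact h₁₂₃.mul_right _
  · refine ((h₁₂'.mul_norm h₃').mul_right ‖p ^ (-((k + i + 1 : ℕ) : ℤ))‖).congr fun w => ?_
    simp only [← norm_zpow, ← norm_mul, hfactor]

theorem hasSum_laurentCoeff_residue (i k : ℕ) (ρ a b : ℂ) {R : ℝ} (hρR : ‖ρ‖ < R) :
    HasSum (fun q : ℕ × ℕ => laurentCoeff i ρ a b (q, q.1 + q.2 + k + i))
      ((2 * π * Complex.I)⁻¹ * ∮ p in C(0, R), (p - ρ) ^ (-((i + 1 : ℕ) : ℤ)) *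
        p ^ (-(k : ℤ)) * Complex.exp (a / p) * Complex.exp (b * p)) := by
  have hR : 0 < R := (norm_nonneg ρ).trans_lt hρR
  have hs : Summable fun w => ‖laurentCoeff i ρ a b w‖ * R ^ laurentExp i k w := by
    simpa [abs_of_pos hR] using
      (hasSum_laurentCoeff_mul_zpow i k ρ a b (p := R) (by simpa [abs_of_pos hR])).2
  have h := hasSum_circleIntegral_of_hasSum_zpow hR hs fun z hz =>
    (hasSum_laurentCoeff_mul_zpow i k ρ a b (hρR.trans_eq (mem_sphere_zero_iff_norm.mp hz).symm)).1
  have hres (w : (ℕ × ℕ) × ℕ) : laurentExp i k w = -1 ↔ w.2 = w.1.1 + w.1.2 + k + i := by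
    simp only [laurentExp]; omega
  have hinj : Function.Injective fun q : ℕ × ℕ => (q, q.1 + q.2 + k + i) :=
    fun q q' h => congrArg Prod.fst h
  rw [← hinj.hasSum_iff] at h
  · refine (h.mul_left (2 * π * Complex.I)⁻¹).congr_fun fun q => ?_
    rw [Function.comp_apply, if_pos ((hres _).mpr rfl),
      inv_mul_cancel_left₀ Complex.two_pi_I_ne_zero]
  · intro w hw
    rw [if_neg]
    exact fun he => hw ⟨w.1, Prod.ext rfl ((hres w).mp he).symm⟩

lemma laurentCoeff_residue_eq (i k : ℕ) (ρ a b : ℝ) (m j : ℕ) :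
    laurentCoeff i ρ a b ((m, j), m + j + k + i) = b ^ (k + i) / (k + i)! *
      ((ascPochhammer ℝ m).eval ((i + 1 : ℕ) : ℝ) /
        ((ascPochhammer ℝ (m + j)).eval ((k + i + 1 : ℕ) : ℝ) * (m ! : ℝ) * (j ! : ℝ)) *
          (ρ * b) ^ m * (a * b) ^ j) := by
  have hm : (i + 1).ascFactorial m = m ! * (m + i).choose i := by
    rw [Nat.ascFactorial_eq_factorial_mul_choose, ← Nat.choose_symm_add, Nat.add_comm i m]
  have hmj : (k + i)! * (k + i + 1).ascFactorial (m + j) = (m + j + k + i)! := by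
    rw [Nat.factorial_mul_ascFactorial, show k + i + (m + j) = m + j + k + i by omega]
  simp only [laurentCoeff]
  rw [← Nat.cast_ascFactorial, ← Nat.cast_ascFactorial, hm, ← hmj,
    show m + j + k + i = m + (j + (k + i)) by omega]
  push_cast
  field_simp
  ring

lemma tsum_laurentCoeff_residue (i k : ℕ) (ρ a b : ℝ)
    (h : Summable fun q : ℕ × ℕ => laurentCoeff i ρ a b (q, q.1 + q.2 + k + i)) :
    ∑' q : ℕ × ℕ, laurentCoeff i ρ a b (q, q.1 + q.2 + k + i) =
      b ^ (k + i) / (k + i)! * Phi3 (i + 1 : ℕ) (k + i + 1 : ℕ) (ρ * b) (a * b) := by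
  rw [h.tsum_prod' h.prod_factor, Phi3, ← tsum_mul_left]
  refine tsum_congr fun m => ?_
  rw [← tsum_mul_left]
  exact tsum_congr fun j => laurentCoeff_residue_eq i k ρ a b m j

theorem Jik_eq_Phi3_general (i k : ℕ) (hi : 1 ≤ i) (ρ : ℝ) (hρ : ρ ∈ Set.Ioo (0 : ℝ) 1)
    (u γ δ : ℝ) (r : ℝ) (hr₀ : ρ < r) :
    Jik i k u γ δ ρ r =
      (((δ ^ 2 / 2) ^ (k + i - 1) / Real.Gamma (k + i) *
          Phi3 i (k + i) (ρ * δ ^ 2 / 2) (u ^ 2 / 2 * (γ ^ 2 * δ ^ 2 / 2)) : ℝ) : ℂ) := by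
  obtain ⟨i, rfl⟩ := Nat.exists_eq_add_of_le' hi
  set a : ℝ := u ^ 2 * γ ^ 2 / 2
  set b : ℝ := δ ^ 2 / 2
  have hJ : HasSum (fun q : ℕ × ℕ => ((laurentCoeff i ρ a b (q, q.1 + q.2 + k + i) : ℝ) : ℂ))
      (Jik (i + 1) k u γ δ ρ r) := by
    have h := hasSum_laurentCoeff_residue i k ρ a b (R := r)
      (by simpa [abs_of_pos hρ.1] using hr₀)
    simp only [ofReal_laurentCoeff]
    convert h using 1
    rw [Jik]
    congr 2
    ext p
    simp only [a, b]
    push_cast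
    ring_nf
  rw [← hJ.tsum_eq, ← Complex.ofReal_tsum,
    tsum_laurentCoeff_residue i k _ _ _ (Complex.summable_ofReal.mp hJ.summable)]
  have hΓ : Real.Gamma (k + (i + 1 : ℕ)) = (k + i)! := by
    rw [← Real.Gamma_nat_eq_factorial]; push_cast; ring_nf
  rw [hΓ, show k + (i + 1) - 1 = k + i by omega]
  simp only [a, b]
  push_cast
  ring_nf

theorem Jik_eq_Phi3 (i k : ℕ) (hi : 1 ≤ i) (ρ : ℝ) (hρ : ρ ∈ Set.Ioo (0 : ℝ) 1)
    (u γ δ : ℝ) (hu : 0 ≤ u) (r : ℝ) (hr₀ : ρ < r) (hr₁ : r < 1) :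
    Jik i k u γ δ ρ r =
      (((δ ^ 2 / 2) ^ (k + i - 1) / Real.Gamma (k + i) *
          Phi3 i (k + i) (ρ * δ ^ 2 / 2) (u ^ 2 / 2 * (γ ^ 2 * δ ^ 2 / 2)) : ℝ) : ℂ) :=
  Jik_eq_Phi3_general i k hi ρ hρ u γ δ r hr₀
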